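/- arXiv:2204.10625 — 5 statements merged into one kernel-verified Lean document; each statement's English description precedes it below -/
import Mathlib

section
/- Let Φ be a quadratic form on ℝ^{n×m} such that Φ(x yᵀ) ≥ 0 for all x ∈ ℝⁿ and y ∈ ℝᵐ. Then Φ is quasiconvex: for every n×m real matrix Z and every smooth compactly supported function φ : ℝᵐ → ℝⁿ, one has ∫_{ℝᵐ} (Φ(Z + Dφ(x)) − Φ(Z)) dx ≥ 0, where Dφ(x) denotes the n×m Jacobian matrix of φ at x, with entries (Dφ(x))_{ij} = ∂φᵢ/∂xⱼ(x). -/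
open Matrix MeasureTheory

/-- The standard inner product `⟨A, B⟩ = trace (A Bᵀ)` on matrices. -/
def matInner {n m : ℕ} (A B : Matrix (Fin n) (Fin m) ℝ) : ℝ := (A * Bᵀ).trace

/-- A quadratic form on `n × m` real matrices: `Φ Z = ⟨Z, C Z⟩` for a symmetric
linear map `C` on matrices. -/
def IsMatQuadraticForm (n m : ℕ) (Φ : Matrix (Fin n) (Fin m) ℝ → ℝ) : Prop :=
  ∃ C : Matrix (Fin n) (Fin m) ℝ →ₗ[ℝ] Matrix (Fin n) (Fin m) ℝ,
    (∀ A B, matInner A (C B) = matInner (C A) B) ∧ ∀ Z, Φ Z = matInner Z (C Z)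

/-- The `n × m` Jacobian matrix of `φ : ℝᵐ → ℝⁿ` at `x`, with entries
`(Dφ x) i j = ∂φᵢ/∂xⱼ (x)`. -/
noncomputable def jacobian (n m : ℕ) (φ : (Fin m → ℝ) → (Fin n → ℝ))
    (x : Fin m → ℝ) : Matrix (Fin n) (Fin m) ℝ :=
  Matrix.of fun i j => fderiv ℝ φ x (Pi.single j 1) i

open Complex FourierTransform RealInnerProductSpace SchwartzMap

set_option maxHeartbeats 1000000

noncomputable section


variable {V : Type*} [NormedAddCommGroup V] [InnerProductSpace ℝ V]

/-- A smooth compactly supported function is a Schwartz map. -/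
def SchwartzMap.ofCompactSupport {E : Type*} [NormedAddCommGroup E] [NormedSpace ℝ E]
    {f : V → E} (h1 : ContDiff ℝ (⊤ : ℕ∞) f) (h2 : HasCompactSupport f) : SchwartzMap V E where
  toFun := f
  smooth' := h1.of_le (by simp)
  decay' := by
    intro k n
    have hcont : Continuous fun x : V => ‖x‖ ^ k * ‖iteratedFDeriv ℝ n f x‖ :=
      (continuous_norm.pow k).mul (h1.continuous_iteratedFDeriv (by exact_mod_cast le_top)).norm
    have hsupp : HasCompactSupport fun x : V => ‖x‖ ^ k * ‖iteratedFDeriv ℝ n f x‖ :=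
      HasCompactSupport.mul_left ((h2.iteratedFDeriv n).norm)
    obtain ⟨C, hC⟩ := hsupp.exists_bound_of_continuous hcont
    refine ⟨C, fun x => ?_⟩
    have := hC x
    rw [Real.norm_eq_abs, _root_.abs_of_nonneg (by positivity)] at this
    exact this

@[simp] lemma SchwartzMap.ofCompactSupport_coe {E : Type*} [NormedAddCommGroup E]
    [NormedSpace ℝ E] {f : V → E} (h1 : ContDiff ℝ (⊤ : ℕ∞) f) (h2 : HasCompactSupport f) :
    ⇑(SchwartzMap.ofCompactSupport h1 h2) = f := rfl

variable [FiniteDimensional ℝ V] [MeasurableSpace V] [BorelSpace V]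

omit [FiniteDimensional ℝ V] [MeasurableSpace V] [BorelSpace V] in
lemma SchwartzMap.norm_le_const (f : 𝓢(V, ℂ)) : ∃ C, ∀ x, ‖f x‖ ≤ C := by
  obtain ⟨C, hC⟩ := f.decay' 0 0
  exact ⟨C, fun x => by have := hC x; simp at this; exact this⟩

lemma schwartz_mul_integrable (f g : 𝓢(V, ℂ)) :
    Integrable (fun x => f x * g x) := by
  obtain ⟨C, hC⟩ := f.norm_le_const
  exact g.integrable.bdd_mul f.continuous.aestronglyMeasurable (ae_of_all _ hC)

/-- Parseval/Plancherel identity for Schwartz functions. -/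
theorem schwartz_parseval (f g : 𝓢(V, ℂ)) :
    ∫ v, f v * (starRingEnd ℂ) (g v) = ∫ ξ, 𝓕 ⇑f ξ * (starRingEnd ℂ) (𝓕 ⇑g ξ) := by
  have hfi : Integrable ⇑f := f.integrable
  have hgi : Integrable ⇑g := g.integrable
  have hGi : Integrable (𝓕 ⇑g) := by
    rw [← SchwartzMap.fourier_coe, ← SchwartzMap.fourierTransformCLM_apply ℂ g]
    exact (SchwartzMap.fourierTransformCLM ℂ g).integrable
  set h : V → ℂ := fun ξ => (starRingEnd ℂ) (𝓕 (⇑g) ξ) with hh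
  have hhi : Integrable h := Complex.conjCLE.toContinuousLinearMap.integrable_comp hGi
  have hkey : 𝓕 h = fun x => (starRingEnd ℂ) (g x) := by
    have hinv : 𝓕⁻ (𝓕 ⇑g) = ⇑g := g.continuous.fourierInv_fourier_eq hgi hGi
    funext x
    have : 𝓕 h x = (starRingEnd ℂ) (𝓕⁻ (𝓕 ⇑g) x) := by
      rw [Real.fourier_eq, Real.fourierInv_eq, ← integral_conj]
      congr 1
      funext v
      simp only [Circle.smul_def, Real.fourierChar_apply, smul_eq_mul, _root_.map_mul]
      congr 1
      rw [← Complex.exp_conj]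
      congr 1
      simp only [_root_.map_mul, Complex.conj_I, Complex.conj_ofReal]
      push_cast
      ring
    rw [this, hinv]
  have mult := VectorFourier.integral_fourierIntegral_smul_eq_flip (L := innerₗ V)
    Real.continuous_fourierChar continuous_inner hfi hhi
  rw [flip_innerₗ] at mult
  have hconv : ∀ (u : V → ℂ), VectorFourier.fourierIntegral 𝐞 volume (innerₗ V) u = 𝓕 u :=
    fun _ => rfl
  rw [hconv, hconv] at mult
  calc ∫ v, f v * (starRingEnd ℂ) (g v)
      = ∫ x, f x • (𝓕 h x) := by rw [hkey]; simp [smul_eq_mul]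
    _ = ∫ ξ, 𝓕 ⇑f ξ * (starRingEnd ℂ) (𝓕 ⇑g ξ) := by rw [← mult]; simp [smul_eq_mul, hh]

/-- Fourier transform of a directional derivative. -/
theorem fourier_fderiv_apply {g : V → ℂ} (h1 : ContDiff ℝ (⊤ : ℕ∞) g) (h2 : HasCompactSupport g)
    (w ξ : V) :
    𝓕 (fun v => fderiv ℝ g v w) ξ
      = (2 * ↑Real.pi * Complex.I * ((inner ℝ ξ w : ℝ) : ℂ)) * 𝓕 g ξ := by
  have hgi : Integrable g := h1.continuous.integrable_of_hasCompactSupport h2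
  have hd : Differentiable ℝ g := h1.differentiable (by simp)
  have hfd : Integrable (fderiv ℝ g) :=
    (h1.continuous_fderiv (by simp)).integrable_of_hasCompactSupport (h2.fderiv (𝕜 := ℝ))
  have heq := Real.fourier_fderiv hgi hd hfd
  have happ : 𝓕 (fun v => fderiv ℝ g v w) ξ = (𝓕 (fderiv ℝ g) ξ) w :=
    (Real.fourier_continuousLinearMap_apply hfd).symm
  rw [happ, heq]
  simp only [VectorFourier.fourierSMulRight_apply, ContinuousLinearMap.neg_apply,
    innerSL_apply_apply, real_smul, smul_eq_mul, neg_smul, neg_neg, Complex.ofReal_neg]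
  rw [innerSL_apply_apply]
  ring

end



lemma matInner_eq_sum {n m : ℕ} (A B : Matrix (Fin n) (Fin m) ℝ) :
    matInner A B = ∑ i, ∑ j, A i j * B i j := by
  simp [matInner, Matrix.trace, Matrix.diag, Matrix.mul_apply, Matrix.transpose_apply]

lemma matC_apply {n m : ℕ} (C : Matrix (Fin n) (Fin m) ℝ →ₗ[ℝ] Matrix (Fin n) (Fin m) ℝ)
    (W : Matrix (Fin n) (Fin m) ℝ) (k : Fin n) (l : Fin m) :
    C W k l = ∑ i, ∑ j, W i j * C (Matrix.single i j 1) k l := by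
  have hW : W = ∑ i, ∑ j, W i j • Matrix.single i j (1 : ℝ) := by
    conv_lhs => rw [Matrix.matrix_eq_sum_single W]
    simp [Matrix.smul_single, smul_eq_mul, mul_one]
  conv_lhs => rw [hW]
  simp only [map_sum, LinearMap.map_smul, Finset.sum_apply, Matrix.sum_apply,
    Matrix.smul_apply, smul_eq_mul]

lemma quad_expand {n m : ℕ} (C : Matrix (Fin n) (Fin m) ℝ →ₗ[ℝ] Matrix (Fin n) (Fin m) ℝ)
    (hsym : ∀ A B, matInner A (C B) = matInner (C A) B)
    (Z W : Matrix (Fin n) (Fin m) ℝ) :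
    matInner (Z + W) (C (Z + W)) - matInner Z (C Z)
      = (∑ i, ∑ j, 2 * C Z i j * W i j)
        + ∑ k, ∑ l, ∑ i, ∑ j,
            C (Matrix.single i j 1) k l * (W i j * W k l) := by
  have h1 : ∑ i, ∑ j, Z i j * C W i j = ∑ i, ∑ j, C Z i j * W i j := by
    rw [← matInner_eq_sum, ← matInner_eq_sum]; exact hsym Z W
  have e2 : ∑ k, ∑ l, W k l * C W k l
      = ∑ k, ∑ l, ∑ i, ∑ j, C (Matrix.single i j 1) k l * (W i j * W k l) := by
    refine Finset.sum_congr rfl fun k _ => Finset.sum_congr rfl fun l _ => ?_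
    rw [matC_apply C W k l, Finset.mul_sum]
    refine Finset.sum_congr rfl fun i _ => ?_
    rw [Finset.mul_sum]
    refine Finset.sum_congr rfl fun j _ => ?_
    ring
  have e1 : ∑ i, ∑ j, C Z i j * W i j + ∑ i, ∑ j, W i j * C Z i j
      = ∑ i, ∑ j, 2 * C Z i j * W i j := by
    rw [← Finset.sum_add_distrib]
    refine Finset.sum_congr rfl fun i _ => ?_
    rw [← Finset.sum_add_distrib]
    refine Finset.sum_congr rfl fun j _ => ?_
    ring
  calc matInner (Z + W) (C (Z + W)) - matInner Z (C Z)
      = (∑ i, ∑ j, (Z i j + W i j) * (C Z i j + C W i j)) - ∑ i, ∑ j, Z i j * C Z i j := by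
        rw [map_add, matInner_eq_sum, matInner_eq_sum]
        simp only [Matrix.add_apply]
    _ = (∑ i, ∑ j, Z i j * C Z i j) + (∑ i, ∑ j, Z i j * C W i j)
        + (∑ i, ∑ j, W i j * C Z i j) + (∑ i, ∑ j, W i j * C W i j)
        - ∑ i, ∑ j, Z i j * C Z i j := by
        simp only [add_mul, mul_add, Finset.sum_add_distrib]; ring
    _ = (∑ i, ∑ j, 2 * C Z i j * W i j)
        + ∑ k, ∑ l, ∑ i, ∑ j,
            C (Matrix.single i j 1) k l * (W i j * W k l) := by
        rw [h1, ← e2, ← e1]; ring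

lemma pw_re {n m : ℕ} (c : Fin n → Fin m → Fin n → Fin m → ℝ)
    (u : Fin n → ℂ) (y : Fin m → ℝ) :
    (∑ k, ∑ l, ∑ i, ∑ j,
        (c i j k l : ℂ) * ((u i * (y j : ℂ)) * (starRingEnd ℂ) (u k * (y l : ℂ)))).re
      = (∑ k, ∑ l, ∑ i, ∑ j, c i j k l * (((u i).re * y j) * ((u k).re * y l)))
        + ∑ k, ∑ l, ∑ i, ∑ j, c i j k l * (((u i).im * y j) * ((u k).im * y l)) := by
  simp only [Complex.re_sum, ← Finset.sum_add_distrib]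
  refine Finset.sum_congr rfl fun k _ => Finset.sum_congr rfl fun l _ =>
    Finset.sum_congr rfl fun i _ => Finset.sum_congr rfl fun j _ => ?_
  simp only [_root_.map_mul, Complex.conj_ofReal, Complex.mul_re, Complex.mul_im,
    Complex.conj_re, Complex.conj_im, Complex.ofReal_re, Complex.ofReal_im]
  ring

/-- A quadratic form on `n × m` matrices which is nonnegative on rank-one matrices is
quasiconvex: for every matrix `Z` and every smooth compactly supported
`φ : ℝᵐ → ℝⁿ`, one has `∫ (Φ (Z + Dφ x) - Φ Z) dx ≥ 0`. -/
theorem rankOne_nonneg_implies_quasiconvex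
    (n m : ℕ) (Φ : Matrix (Fin n) (Fin m) ℝ → ℝ)
    (hq : IsMatQuadraticForm n m Φ)
    (hr1 : ∀ (x : Fin n → ℝ) (y : Fin m → ℝ), 0 ≤ Φ (vecMulVec x y))
    (Z : Matrix (Fin n) (Fin m) ℝ)
    (φ : (Fin m → ℝ) → (Fin n → ℝ))
    (hφ : ContDiff ℝ (⊤ : ℕ∞) φ) (hφc : HasCompactSupport φ) :
    0 ≤ ∫ x : Fin m → ℝ, (Φ (Z + jacobian n m φ x) - Φ Z) := by
  classical
  obtain ⟨C, hsym, hΦ⟩ := hq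
  set c : Fin n → Fin m → Fin n → Fin m → ℝ :=
    fun i j k l => C (Matrix.single i j 1) k l with hc
  -- nonnegativity on rank-one matrices, in coordinates
  have hpos : ∀ (a : Fin n → ℝ) (y : Fin m → ℝ),
      0 ≤ ∑ k, ∑ l, ∑ i, ∑ j, c i j k l * ((a i * y j) * (a k * y l)) := by
    intro a y
    have h0 := quad_expand C hsym 0 (vecMulVec a y)
    simp only [zero_add, map_zero, Matrix.zero_apply, mul_zero, zero_mul,
      Finset.sum_const_zero, sub_zero] at h0
    have : Φ (vecMulVec a y) = ∑ k, ∑ l, ∑ i, ∑ j,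
        c i j k l * (vecMulVec a y i j * vecMulVec a y k l) := by
      rw [hΦ, ← h0]
      simp [matInner]
    have h2 := hr1 a y
    rw [this] at h2
    simpa only [Matrix.vecMulVec_apply] using h2
  -- transfer to Euclidean space
  set L : EuclideanSpace ℝ (Fin m) ≃L[ℝ] (Fin m → ℝ) :=
    PiLp.continuousLinearEquiv 2 ℝ (fun _ : Fin m => ℝ) with hLdef
  set ψ : EuclideanSpace ℝ (Fin m) → (Fin n → ℝ) := fun v => φ (L v) with hψdef
  have hψ : ContDiff ℝ (⊤ : ℕ∞) ψ := hφ.comp L.contDiff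
  have hψc : HasCompactSupport ψ := hφc.comp_homeomorph L.toHomeomorph
  have hψd : Differentiable ℝ ψ := hψ.differentiable (by simp)
  set p : Fin n → Fin m → EuclideanSpace ℝ (Fin m) → ℝ :=
    fun i j v => fderiv ℝ ψ v (EuclideanSpace.single j 1) i with hp
  have hfd : ∀ v : EuclideanSpace ℝ (Fin m),
      fderiv ℝ ψ v = (fderiv ℝ φ (L v)).comp
        (L : EuclideanSpace ℝ (Fin m) →L[ℝ] (Fin m → ℝ)) :=
    fun v => (((hφ.differentiable (by simp) (L v)).hasFDerivAt).comp v
      ((L : EuclideanSpace ℝ (Fin m) →L[ℝ] (Fin m → ℝ)).hasFDerivAt)).fderiv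
  have hLsingle : ∀ j : Fin m, L (EuclideanSpace.single j 1) = Pi.single j 1 := fun j => rfl
  have hjac : ∀ (v : EuclideanSpace ℝ (Fin m)) (i : Fin n) (j : Fin m),
      jacobian n m φ (L v) i j = p i j v := by
    intro v i j
    simp only [jacobian, Matrix.of_apply, hp]
    rw [hfd v]
    simp only [ContinuousLinearMap.coe_comp', Function.comp_apply,
      ContinuousLinearEquiv.coe_coe, hLsingle]
  -- complexified components
  set g : Fin n → EuclideanSpace ℝ (Fin m) → ℂ := fun i v => ((ψ v i : ℝ) : ℂ) with hg
  have hgs : ∀ i, ContDiff ℝ (⊤ : ℕ∞) (g i) := fun i =>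
    Complex.ofRealCLM.contDiff.comp (contDiff_pi.mp hψ i)
  have hgc : ∀ i, HasCompactSupport (g i) := fun i =>
    hψc.comp_left (g := fun y : Fin n → ℝ => ((y i : ℝ) : ℂ)) (by simp)
  have hgder : ∀ (i : Fin n) (v w : EuclideanSpace ℝ (Fin m)),
      fderiv ℝ (g i) v w = ((fderiv ℝ ψ v w i : ℝ) : ℂ) := by
    intro i v w
    set T : (Fin n → ℝ) →L[ℝ] ℂ :=
      Complex.ofRealCLM.comp (ContinuousLinearMap.proj i) with hT
    have h1 : HasFDerivAt (⇑T ∘ ψ) (T.comp (fderiv ℝ ψ v)) v :=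
      (T.hasFDerivAt).comp v (hψd v).hasFDerivAt
    have h2 : g i = ⇑T ∘ ψ := rfl
    rw [h2, h1.fderiv]; rfl
  -- continuity and support of p
  have hfc : ContDiff ℝ (⊤ : ℕ∞) (fun v : EuclideanSpace ℝ (Fin m) => fderiv ℝ ψ v) :=
    hψ.fderiv_right (by simp)
  have hpc : ∀ i j, Continuous (p i j) := by
    intro i j
    exact (continuous_apply i).comp ((hfc.clm_apply contDiff_const).continuous)
  have hpsupp : ∀ i j, HasCompactSupport (p i j) := by
    intro i j
    exact (hψc.fderiv (𝕜 := ℝ)).comp_left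
      (g := fun T : EuclideanSpace ℝ (Fin m) →L[ℝ] (Fin n → ℝ) =>
        T (EuclideanSpace.single j 1) i) (by simp)
  have hpint : ∀ i j, Integrable (p i j) := fun i j =>
    (hpc i j).integrable_of_hasCompactSupport (hpsupp i j)
  have hppint : ∀ i j k l, Integrable (fun v => p i j v * p k l v) := fun i j k l =>
    ((hpc i j).mul (hpc k l)).integrable_of_hasCompactSupport
      (HasCompactSupport.mul_left (hpsupp k l))
  -- Schwartz maps for the complexified partial derivatives
  have hFs : ∀ i j, ContDiff ℝ (⊤ : ℕ∞) (fun v => ((p i j v : ℝ) : ℂ)) := by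
    intro i j
    have hE : (fun v => ((p i j v : ℝ) : ℂ))
        = fun v => fderiv ℝ (g i) v (EuclideanSpace.single j 1) := by
      funext v; rw [hgder]
    rw [hE]
    exact ((hgs i).fderiv_right (by simp)).clm_apply contDiff_const
  have hFc : ∀ i j, HasCompactSupport (fun v => ((p i j v : ℝ) : ℂ)) := fun i j =>
    (hpsupp i j).comp_left (g := fun t : ℝ => (t : ℂ)) (by simp)
  set F : Fin n → Fin m → SchwartzMap (EuclideanSpace ℝ (Fin m)) ℂ :=
    fun i j => SchwartzMap.ofCompactSupport (hFs i j) (hFc i j) with hF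
  have hFcoe : ∀ i j, ⇑(F i j) = fun v => ((p i j v : ℝ) : ℂ) := fun i j => rfl
  -- Fourier transform is rank one
  have hFT : ∀ (i : Fin n) (j : Fin m) (ξ : EuclideanSpace ℝ (Fin m)),
      𝓕 ⇑(F i j) ξ = (2 * ↑Real.pi * Complex.I * 𝓕 (g i) ξ) * ((ξ j : ℝ) : ℂ) := by
    intro i j ξ
    have h0 : ⇑(F i j) = fun v => fderiv ℝ (g i) v (EuclideanSpace.single j 1) := by
      funext v; rw [hFcoe, hgder]
    rw [h0, fourier_fderiv_apply (hgs i) (hgc i)]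
    have hin : (inner ℝ ξ (EuclideanSpace.single j (1 : ℝ)) : ℝ) = ξ j := by
      rw [EuclideanSpace.inner_single_right]; simp
    rw [hin]; ring
  -- integrals of the partial derivatives vanish
  have hp0 : ∀ i j, ∫ v, p i j v = 0 := by
    intro i j
    have h2 : ∫ v, ((p i j v : ℝ) : ℂ) = 𝓕 ⇑(F i j) 0 := by
      rw [Real.fourier_eq]
      simp [hFcoe]
    have h3 := hFT i j 0
    have h4 : ((0 : EuclideanSpace ℝ (Fin m)) j : ℝ) = 0 := rfl
    rw [h4] at h3
    have h6 : ∫ v, ((p i j v : ℝ) : ℂ) = ((∫ v, p i j v : ℝ) : ℂ) := integral_ofReal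
    have h5 : ((∫ v, p i j v : ℝ) : ℂ) = 0 := by
      rw [← h6, h2, h3]
      simp
    exact_mod_cast h5
  -- rewrite the goal over Euclidean space
  have htrans := (EuclideanSpace.volume_preserving_symm_measurableEquiv_toLp (Fin m)).integral_comp
    (MeasurableEquiv.toLp 2 (Fin m → ℝ)).symm.measurableEmbedding
    (fun x => Φ (Z + jacobian n m φ x) - Φ Z)
  rw [← htrans]
  have he : ∀ v : EuclideanSpace ℝ (Fin m),
      (MeasurableEquiv.toLp 2 (Fin m → ℝ)).symm v = L v := fun v => rfl
  have hsplit : ∀ v : EuclideanSpace ℝ (Fin m),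
      Φ (Z + jacobian n m φ ((MeasurableEquiv.toLp 2 (Fin m → ℝ)).symm v)) - Φ Z
        = (∑ i, ∑ j, 2 * C Z i j * p i j v)
          + ∑ k, ∑ l, ∑ i, ∑ j, c i j k l * (p i j v * p k l v) := by
    intro v
    rw [he v, hΦ, hΦ, quad_expand C hsym Z (jacobian n m φ (L v))]
    simp only [hjac, hc]
  simp only [hsplit]
  -- split the integral
  have hlin_int : Integrable (fun v => ∑ i, ∑ j, 2 * C Z i j * p i j v) :=
    integrable_finset_sum _ fun i _ => integrable_finset_sum _ fun j _ =>
      (hpint i j).const_mul _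
  have hquad_int : Integrable
      (fun v => ∑ k, ∑ l, ∑ i, ∑ j, c i j k l * (p i j v * p k l v)) :=
    integrable_finset_sum _ fun k _ => integrable_finset_sum _ fun l _ =>
      integrable_finset_sum _ fun i _ => integrable_finset_sum _ fun j _ =>
        (hppint i j k l).const_mul _
  rw [integral_add hlin_int hquad_int]
  -- the linear part vanishes
  have hlin0 : ∫ v, (∑ i, ∑ j, 2 * C Z i j * p i j v) = 0 := by
    rw [integral_finset_sum _ fun i _ => integrable_finset_sum _ fun j _ =>
      (hpint i j).const_mul _]
    refine Finset.sum_eq_zero fun i _ => ?_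
    rw [integral_finset_sum _ fun j _ => (hpint i j).const_mul _]
    refine Finset.sum_eq_zero fun j _ => ?_
    rw [integral_const_mul, hp0 i j, mul_zero]
  rw [hlin0, zero_add]
  -- quadratic part: exchange sum and integral
  have hquad : ∫ v, (∑ k, ∑ l, ∑ i, ∑ j, c i j k l * (p i j v * p k l v))
      = ∑ k, ∑ l, ∑ i, ∑ j, c i j k l * ∫ v, p i j v * p k l v := by
    rw [integral_finset_sum _ fun k _ => integrable_finset_sum _ fun l _ =>
      integrable_finset_sum _ fun i _ => integrable_finset_sum _ fun j _ =>
        (hppint i j k l).const_mul _]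
    refine Finset.sum_congr rfl fun k _ => ?_
    rw [integral_finset_sum _ fun l _ => integrable_finset_sum _ fun i _ =>
      integrable_finset_sum _ fun j _ => (hppint i j k l).const_mul _]
    refine Finset.sum_congr rfl fun l _ => ?_
    rw [integral_finset_sum _ fun i _ => integrable_finset_sum _ fun j _ =>
      (hppint i j k l).const_mul _]
    refine Finset.sum_congr rfl fun i _ => ?_
    rw [integral_finset_sum _ fun j _ => (hppint i j k l).const_mul _]
    refine Finset.sum_congr rfl fun j _ => ?_
    rw [integral_const_mul]
  rw [hquad]
  -- Parseval: move to the Fourier side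
  have hRC : ∀ i j k l, ((∫ v, p i j v * p k l v : ℝ) : ℂ)
      = ∫ ξ, 𝓕 ⇑(F i j) ξ * (starRingEnd ℂ) (𝓕 ⇑(F k l) ξ) := by
    intro i j k l
    rw [← schwartz_parseval (F i j) (F k l)]
    have h6 : ∫ v, ((p i j v * p k l v : ℝ) : ℂ)
        = ((∫ v, p i j v * p k l v : ℝ) : ℂ) := integral_ofReal
    rw [← h6]
    congr 1
    funext v
    simp [hFcoe, Complex.conj_ofReal]
  have hprod_int : ∀ i j k l,
      Integrable (fun ξ => 𝓕 ⇑(F i j) ξ * (starRingEnd ℂ) (𝓕 ⇑(F k l) ξ)) := by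
    intro i j k l
    have h1 : Integrable (fun ξ => (starRingEnd ℂ)
        ((SchwartzMap.fourierTransformCLM ℂ (F k l)) ξ)) :=
      Complex.conjCLE.toContinuousLinearMap.integrable_comp
        (SchwartzMap.fourierTransformCLM ℂ (F k l)).integrable
    obtain ⟨Cb, hCb⟩ := (SchwartzMap.fourierTransformCLM ℂ (F i j)).norm_le_const
    have h2 := h1.bdd_mul
      (SchwartzMap.fourierTransformCLM ℂ (F i j)).continuous.aestronglyMeasurable (ae_of_all _ hCb)
    simpa only [SchwartzMap.fourierTransformCLM_apply, SchwartzMap.fourier_coe] using h2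
  have hsum_int : Integrable (fun ξ => ∑ k, ∑ l, ∑ i, ∑ j,
      ((c i j k l : ℝ) : ℂ) * (𝓕 ⇑(F i j) ξ * (starRingEnd ℂ) (𝓕 ⇑(F k l) ξ))) :=
    integrable_finset_sum _ fun k _ => integrable_finset_sum _ fun l _ =>
      integrable_finset_sum _ fun i _ => integrable_finset_sum _ fun j _ =>
        (hprod_int i j k l).const_mul _
  have hmain : ∑ k, ∑ l, ∑ i, ∑ j, c i j k l * ∫ v, p i j v * p k l v
      = ∫ ξ, (∑ k, ∑ l, ∑ i, ∑ j,
          ((c i j k l : ℝ) : ℂ) * (𝓕 ⇑(F i j) ξ * (starRingEnd ℂ) (𝓕 ⇑(F k l) ξ))).re := by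
    have hre : (∫ ξ, (∑ k, ∑ l, ∑ i, ∑ j,
        ((c i j k l : ℝ) : ℂ) * (𝓕 ⇑(F i j) ξ * (starRingEnd ℂ) (𝓕 ⇑(F k l) ξ))).re)
        = (∫ ξ, ∑ k, ∑ l, ∑ i, ∑ j,
        ((c i j k l : ℝ) : ℂ) * (𝓕 ⇑(F i j) ξ * (starRingEnd ℂ) (𝓕 ⇑(F k l) ξ))).re :=
      integral_re hsum_int
    rw [hre]
    rw [integral_finset_sum _ fun k _ => integrable_finset_sum _ fun l _ =>
      integrable_finset_sum _ fun i _ => integrable_finset_sum _ fun j _ =>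
        (hprod_int i j k l).const_mul _]
    rw [Complex.re_sum]
    refine Finset.sum_congr rfl fun k _ => ?_
    rw [integral_finset_sum _ fun l _ => integrable_finset_sum _ fun i _ =>
      integrable_finset_sum _ fun j _ => (hprod_int i j k l).const_mul _, Complex.re_sum]
    refine Finset.sum_congr rfl fun l _ => ?_
    rw [integral_finset_sum _ fun i _ => integrable_finset_sum _ fun j _ =>
      (hprod_int i j k l).const_mul _, Complex.re_sum]
    refine Finset.sum_congr rfl fun i _ => ?_
    rw [integral_finset_sum _ fun j _ => (hprod_int i j k l).const_mul _, Complex.re_sum]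
    refine Finset.sum_congr rfl fun j _ => ?_
    rw [integral_const_mul]
    rw [show (∫ ξ, 𝓕 ⇑(F i j) ξ * (starRingEnd ℂ) (𝓕 ⇑(F k l) ξ)) =
      ((∫ v, p i j v * p k l v : ℝ) : ℂ) from (hRC i j k l).symm]
    simp [Complex.mul_re]
  rw [hmain]
  -- pointwise nonnegativity
  refine integral_nonneg fun ξ => ?_
  have hptwise : (∑ k, ∑ l, ∑ i, ∑ j,
      ((c i j k l : ℝ) : ℂ) * (𝓕 ⇑(F i j) ξ * (starRingEnd ℂ) (𝓕 ⇑(F k l) ξ))).re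
      = (∑ k, ∑ l, ∑ i, ∑ j, c i j k l *
          (((2 * ↑Real.pi * Complex.I * 𝓕 (g i) ξ).re * ξ j)
            * ((2 * ↑Real.pi * Complex.I * 𝓕 (g k) ξ).re * ξ l)))
        + ∑ k, ∑ l, ∑ i, ∑ j, c i j k l *
          (((2 * ↑Real.pi * Complex.I * 𝓕 (g i) ξ).im * ξ j)
            * ((2 * ↑Real.pi * Complex.I * 𝓕 (g k) ξ).im * ξ l)) := by
    have := pw_re c (fun i => 2 * ↑Real.pi * Complex.I * 𝓕 (g i) ξ) (fun j => ξ j)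
    simp only [hFT]
    exact this
  rw [hptwise]
  exact add_nonneg (hpos _ _) (hpos _ _)
end

section
/- Let Φ be a quadratic form on ℝ^{n×m}. Then Φ(x yᵀ) = 0 for all x ∈ ℝⁿ, y ∈ ℝᵐ if and only if Φ is a linear combination of 2×2 minors: there exist real coefficients c_{ikjl}, indexed by pairs 1 ≤ i < k ≤ n and 1 ≤ j < l ≤ m, such that Φ(Z) = Σ_{i<k, j<l} c_{ikjl} · (Z_{ij} Z_{kl} − Z_{il} Z_{kj}) for all n×m real matrices Z. -/
/-!
Write `Φ Z = β Z Z` for the symmetric bilinear form `β A B = ⟨A, C B⟩` and let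
`E i j = Matrix.single i j 1`. Polarizing `Φ (x yᵀ) = 0` at `x = e i + e k`, `y = e j + e l`
shows that `β (E i j) (E k l)` vanishes when `i = k` or `j = l` and changes sign when `j` and
`l` are swapped. Expanding `β Z Z` in the basis `E`, the four terms indexed by
`(i, j, k, l)`, `(k, l, i, j)`, `(i, l, k, j)`, `(k, j, i, l)` with `i < k`, `j < l` then add
up to `2 β (E i j) (E k l)` times the minor `Z i j * Z k l - Z i l * Z k j`.
-/

open Matrix

theorem Finset.sum_sum_eq_sum_sum_lt_add_swap {ι M : Type*} [Fintype ι] [LinearOrder ι]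
    [AddCommMonoid M] (f : ι → ι → M) (hf : ∀ i, f i i = 0) :
    ∑ i, ∑ k, f i k = ∑ i, ∑ k, if i < k then f i k + f k i else 0 := by
  have hsplit : ∀ i k, f i k = (if i < k then f i k else 0) + (if k < i then f i k else 0) := by
    intro i k
    rcases lt_trichotomy i k with h | rfl | h
    · simp [h, h.not_gt]
    · simp [hf]
    · simp [h, h.not_gt]
  calc ∑ i, ∑ k, f i k
      = (∑ i, ∑ k, if i < k then f i k else 0) + ∑ i, ∑ k, if k < i then f i k else 0 := by
        simp only [← Finset.sum_add_distrib, ← hsplit]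
    _ = (∑ i, ∑ k, if i < k then f i k else 0) + ∑ k, ∑ i, if k < i then f i k else 0 := by
        rw [Finset.sum_comm (f := fun i k => if k < i then f i k else 0)]
    _ = ∑ i, ∑ k, if i < k then f i k + f k i else 0 := by
        simp only [← Finset.sum_add_distrib, ite_add_ite, add_zero]

theorem sum_mul_mul_eq_sum_minors {ι κ R : Type*} [Fintype ι] [LinearOrder ι] [Fintype κ]
    [LinearOrder κ] [CommRing R] (d : ι → κ → ι → κ → R) (Z : Matrix ι κ R)
    (h_row : ∀ i j l, d i j i l = 0) (h_col : ∀ i k j, d i j k j = 0)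
    (h_symm : ∀ i j k l, d i j k l = d k l i j) (h_swap : ∀ i k j l, d i j k l = -d i l k j) :
    ∑ i, ∑ k, ∑ j, ∑ l, Z i j * Z k l * d i j k l =
      ∑ i, ∑ k, ∑ j, ∑ l,
        if i < k ∧ j < l then 2 * d i j k l * (Z i j * Z k l - Z i l * Z k j) else 0 := by
  rw [Finset.sum_sum_eq_sum_sum_lt_add_swap _ fun i => by simp [h_row]]
  refine Finset.sum_congr rfl fun i _ => Finset.sum_congr rfl fun k _ => ?_
  by_cases hik : i < k
  · simp only [hik, true_and, if_true, ← Finset.sum_add_distrib]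
    rw [Finset.sum_sum_eq_sum_sum_lt_add_swap _ fun j => by simp [h_col]]
    refine Finset.sum_congr rfl fun j _ => Finset.sum_congr rfl fun l _ => ?_
    split_ifs
    · rw [h_symm k l i j, h_symm k j i l, h_swap i k l j]
      ring
    · rfl
  · simp [hik]

namespace LinearMap.BilinForm

variable {R ι κ : Type*} [Field R] {β : LinearMap.BilinForm R (Matrix ι κ R)}

theorem IsSymm.apply_add_add (hβ : β.IsSymm) (A B : Matrix ι κ R) :
    β (A + B) (A + B) = β A A + β B B + 2 * β A B := by
  simp only [map_add, LinearMap.add_apply, hβ.eq B A]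
  ring

variable [DecidableEq ι] [DecidableEq κ]

theorem apply_self_eq_sum [Fintype ι] [Fintype κ] (Z : Matrix ι κ R) :
    β Z Z =
      ∑ i, ∑ k, ∑ j, ∑ l, Z i j * Z k l * β (Matrix.single i j 1) (Matrix.single k l 1) := by
  have hZ : Z = ∑ i, ∑ j, Z i j • Matrix.single i j 1 := by
    simpa only [smul_single, smul_eq_mul, mul_one] using matrix_eq_sum_single Z
  conv_lhs => rw [hZ]
  simp only [sum_left]
  simp only [smul_left, sum_right, smul_right, ← mul_assoc]
  refine Finset.sum_congr rfl fun i _ => Finset.sum_comm.trans ?_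
  simp only [mul_comm (Z _ _) (Z i _)]

theorem apply_single_single_self_eq_zero
    (hv : ∀ x y, β (vecMulVec x y) (vecMulVec x y) = 0) (i : ι) (j : κ) :
    β (Matrix.single i j 1) (Matrix.single i j 1) = 0 := by
  simpa only [← single_eq_single_vecMulVec_single] using hv (Pi.single i 1) (Pi.single j 1)

variable [NeZero (2 : R)]

theorem apply_single_single_row_eq_zero (hβ : β.IsSymm)
    (hv : ∀ x y, β (vecMulVec x y) (vecMulVec x y) = 0) (i : ι) (j l : κ) :
    β (Matrix.single i j 1) (Matrix.single i l 1) = 0 := by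
  have h := hv (Pi.single i 1) (Pi.single j 1 + Pi.single l 1)
  rw [vecMulVec_add, ← single_eq_single_vecMulVec_single, ← single_eq_single_vecMulVec_single,
    hβ.apply_add_add, apply_single_single_self_eq_zero hv, apply_single_single_self_eq_zero hv,
    zero_add, zero_add] at h
  exact (mul_eq_zero.mp h).resolve_left two_ne_zero

theorem apply_single_single_col_eq_zero (hβ : β.IsSymm)
    (hv : ∀ x y, β (vecMulVec x y) (vecMulVec x y) = 0) (i k : ι) (j : κ) :
    β (Matrix.single i j 1) (Matrix.single k j 1) = 0 := by
  have h := hv (Pi.single i 1 + Pi.single k 1) (Pi.single j 1)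
  rw [add_vecMulVec, ← single_eq_single_vecMulVec_single, ← single_eq_single_vecMulVec_single,
    hβ.apply_add_add, apply_single_single_self_eq_zero hv, apply_single_single_self_eq_zero hv,
    zero_add, zero_add] at h
  exact (mul_eq_zero.mp h).resolve_left two_ne_zero

theorem apply_single_single_eq_neg (hβ : β.IsSymm)
    (hv : ∀ x y, β (vecMulVec x y) (vecMulVec x y) = 0) (i k : ι) (j l : κ) :
    β (Matrix.single i j 1) (Matrix.single k l 1) =
      -β (Matrix.single i l 1) (Matrix.single k j 1) := by
  have h := hv (Pi.single i 1 + Pi.single k 1) (Pi.single j 1 + Pi.single l 1)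
  rw [add_vecMulVec, hβ.apply_add_add, hv, hv, zero_add, zero_add] at h
  simp only [vecMulVec_add, ← single_eq_single_vecMulVec_single, map_add, LinearMap.add_apply,
    apply_single_single_col_eq_zero hβ hv, zero_add, add_zero] at h
  exact eq_neg_of_add_eq_zero_right ((mul_eq_zero.mp h).resolve_left two_ne_zero)

end LinearMap.BilinForm

theorem matInner_comm {n m : ℕ} (A B : Matrix (Fin n) (Fin m) ℝ) :
    matInner A B = matInner B A := by
  rw [matInner, matInner, ← trace_transpose, transpose_mul, transpose_transpose]

def matInnerBilin (n m : ℕ) : LinearMap.BilinForm ℝ (Matrix (Fin n) (Fin m) ℝ) :=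
  LinearMap.mk₂ ℝ matInner (fun _ _ _ => by simp [matInner, Matrix.add_mul])
    (fun _ _ _ => by simp [matInner]) (fun _ _ _ => by simp [matInner, Matrix.mul_add])
    (fun _ _ _ => by simp [matInner])

theorem IsMatQuadraticForm.exists_bilinForm {n m : ℕ} {Φ : Matrix (Fin n) (Fin m) ℝ → ℝ}
    (hΦ : IsMatQuadraticForm n m Φ) :
    ∃ β : LinearMap.BilinForm ℝ (Matrix (Fin n) (Fin m) ℝ), β.IsSymm ∧ ∀ Z, Φ Z = β Z Z := by
  obtain ⟨C, hC, hΦC⟩ := hΦ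
  refine ⟨(matInnerBilin n m).compl₂ C, ⟨fun A B => ?_⟩, hΦC⟩
  change matInner A (C B) = matInner B (C A)
  rw [hC, matInner_comm]

/-- A quadratic form `Φ` on `n × m` real matrices vanishes on all rank-one matrices
`x yᵀ` if and only if it is a linear combination of `2 × 2` minors
`Z i j * Z k l - Z i l * Z k j` (for `i < k`, `j < l`). -/
theorem vanishes_on_rankOne_iff_lin_comb_of_minors
    (n m : ℕ) (Φ : Matrix (Fin n) (Fin m) ℝ → ℝ)
    (hq : IsMatQuadraticForm n m Φ) :
    (∀ (x : Fin n → ℝ) (y : Fin m → ℝ), Φ (vecMulVec x y) = 0) ↔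
    ∃ c : Fin n → Fin n → Fin m → Fin m → ℝ,
      ∀ Z : Matrix (Fin n) (Fin m) ℝ,
        Φ Z = ∑ i, ∑ k, ∑ j, ∑ l,
          if i < k ∧ j < l then c i k j l * (Z i j * Z k l - Z i l * Z k j) else 0 := by
  obtain ⟨β, hβ, hΦ⟩ := hq.exists_bilinForm
  constructor
  · intro hv
    simp only [hΦ] at hv
    refine ⟨fun i k j l => 2 * β (single i j 1) (single k l 1), fun Z => ?_⟩
    rw [hΦ, β.apply_self_eq_sum, sum_mul_mul_eq_sum_minors]
    · exact LinearMap.BilinForm.apply_single_single_row_eq_zero hβ hv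
    · exact LinearMap.BilinForm.apply_single_single_col_eq_zero hβ hv
    · exact fun _ _ _ _ => hβ.eq _ _
    · exact LinearMap.BilinForm.apply_single_single_eq_neg hβ hv
  · rintro ⟨c, hc⟩ x y
    rw [hc]
    refine Finset.sum_eq_zero fun i _ => Finset.sum_eq_zero fun k _ =>
      Finset.sum_eq_zero fun j _ => Finset.sum_eq_zero fun l _ => ?_
    simp only [vecMulVec_apply]
    split_ifs <;> ring
end

section
/- Let Q₁ and Q₂ be nonnegative quadratic forms on ℝᵈ such that every zero of Q₁ is a zero of Q₂ (i.e., Q₁(x) = 0 implies Q₂(x) = 0 for all x ∈ ℝᵈ). Then there exists a real number α > 0 such that Q₁(x) ≥ α · Q₂(x) for all x ∈ ℝᵈ. -/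
/-!
A nonnegative quadratic form is a squared norm `Q(x) = ‖B x‖²` (take `M = Bᵀ B`). The zero
condition says `ker B₁ ≤ ker B₂`, so `B₂` factors through `B₁` by a linear map, which is bounded
because its domain is finite-dimensional: `‖B₂ x‖ ≤ C ‖B₁ x‖`, i.e. `Q₂ ≤ C² Q₁`.
-/

open Matrix

namespace LinearMap

variable {K V V' V'' : Type*} [DivisionRing K] [AddCommGroup V] [Module K V]
  [AddCommGroup V'] [Module K V'] [AddCommGroup V''] [Module K V'']

theorem exists_comp_eq_of_ker_le (f : V →ₗ[K] V') (g : V →ₗ[K] V'') (h : ker f ≤ ker g) :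
    ∃ l : V' →ₗ[K] V'', l ∘ₗ f = g := by
  obtain ⟨s, hs⟩ := (ker f).liftQ f le_rfl |>.exists_leftInverse_of_injective
    ((ker f).ker_liftQ_eq_bot f le_rfl le_rfl)
  refine ⟨(ker f).liftQ g h ∘ₗ s, LinearMap.ext fun x => ?_⟩
  have hsx : s (f x) = (ker f).mkQ x := LinearMap.congr_fun hs ((ker f).mkQ x)
  simp [hsx]

theorem exists_norm_le_mul_norm_of_ker_le {𝕜 E F G : Type*} [NontriviallyNormedField 𝕜]
    [CompleteSpace 𝕜] [AddCommGroup E] [Module 𝕜 E]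
    [NormedAddCommGroup F] [NormedSpace 𝕜 F] [FiniteDimensional 𝕜 F]
    [NormedAddCommGroup G] [NormedSpace 𝕜 G]
    (f : E →ₗ[𝕜] F) (g : E →ₗ[𝕜] G) (h : ker f ≤ ker g) :
    ∃ C, ∀ x, ‖g x‖ ≤ C * ‖f x‖ := by
  obtain ⟨l, rfl⟩ := f.exists_comp_eq_of_ker_le g h
  exact ⟨‖toContinuousLinearMap l‖, fun x => (toContinuousLinearMap l).le_opNorm (f x)⟩

end LinearMap

namespace Matrix

variable {n : Type*} [Fintype n]

theorem IsSymm.posSemidef_of_dotProduct_mulVec_nonneg {M : Matrix n n ℝ} (hM : M.IsSymm)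
    (hnonneg : ∀ x, 0 ≤ x ⬝ᵥ M *ᵥ x) : M.PosSemidef :=
  .of_dotProduct_mulVec_nonneg (isHermitian_iff_isSymm.mpr hM) fun x => by simpa using hnonneg x

theorem dotProduct_self_eq_norm_sq (v : n → ℝ) : v ⬝ᵥ v = ‖WithLp.toLp 2 v‖ ^ 2 := by
  rw [← real_inner_self_eq_norm_sq, EuclideanSpace.inner_eq_star_dotProduct]
  simp

open scoped MatrixOrder in
theorem PosSemidef.exists_dotProduct_mulVec_eq_norm_sq {M : Matrix n n ℝ} (hM : M.PosSemidef) :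
    ∃ f : (n → ℝ) →ₗ[ℝ] EuclideanSpace ℝ n, ∀ x, x ⬝ᵥ M *ᵥ x = ‖f x‖ ^ 2 := by
  classical
  obtain ⟨B, rfl⟩ := CStarAlgebra.nonneg_iff_eq_star_mul_self.mp hM.nonneg
  refine ⟨(WithLp.linearEquiv 2 ℝ (n → ℝ)).symm.toLinearMap ∘ₗ B.mulVecLin, fun x => ?_⟩
  rw [← mulVec_mulVec, dotProduct_mulVec, star_eq_conjTranspose,
    conjTranspose_eq_transpose_of_trivial, vecMul_transpose]
  simp [dotProduct_self_eq_norm_sq]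

end Matrix

/-- If `Q₁ (x) = xᵀ M₁ x` and `Q₂ (x) = xᵀ M₂ x` are nonnegative quadratic forms on
`ℝᵈ` and every zero of `Q₁` is a zero of `Q₂`, then `Q₁ ≥ α Q₂` for some `α > 0`. -/
theorem nonneg_quadratic_dominates_of_zeros_subset
    (d : ℕ) (M₁ M₂ : Matrix (Fin d) (Fin d) ℝ)
    (hs₁ : M₁.IsSymm) (hs₂ : M₂.IsSymm)
    (hn₁ : ∀ x : Fin d → ℝ, 0 ≤ x ⬝ᵥ M₁.mulVec x)
    (hn₂ : ∀ x : Fin d → ℝ, 0 ≤ x ⬝ᵥ M₂.mulVec x)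
    (hz : ∀ x : Fin d → ℝ, x ⬝ᵥ M₁.mulVec x = 0 → x ⬝ᵥ M₂.mulVec x = 0) :
    ∃ α : ℝ, 0 < α ∧ ∀ x : Fin d → ℝ, α * (x ⬝ᵥ M₂.mulVec x) ≤ x ⬝ᵥ M₁.mulVec x := by
  obtain ⟨f₁, hf₁⟩ :=
    (hs₁.posSemidef_of_dotProduct_mulVec_nonneg hn₁).exists_dotProduct_mulVec_eq_norm_sq
  obtain ⟨f₂, hf₂⟩ :=
    (hs₂.posSemidef_of_dotProduct_mulVec_nonneg hn₂).exists_dotProduct_mulVec_eq_norm_sq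
  have hker : LinearMap.ker f₁ ≤ LinearMap.ker f₂ := fun x hx => by
    have hQ₂ := hz x (by rw [hf₁, LinearMap.mem_ker.mp hx, norm_zero, sq, zero_mul])
    simpa [hf₂] using hQ₂
  obtain ⟨C, hC⟩ := LinearMap.exists_norm_le_mul_norm_of_ker_le f₁ f₂ hker
  refine ⟨(C ^ 2 + 1)⁻¹, by positivity, fun x => ?_⟩
  rw [hf₁, hf₂, inv_mul_le_iff₀ (by positivity)]
  calc ‖f₂ x‖ ^ 2 ≤ (C * ‖f₁ x‖) ^ 2 := pow_le_pow_left₀ (norm_nonneg _) (hC x) 2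
    _ = C ^ 2 * ‖f₁ x‖ ^ 2 := mul_pow _ _ _
    _ ≤ (C ^ 2 + 1) * ‖f₁ x‖ ^ 2 := by gcongr; linarith
end

section
/- Let f(x₀,x₁,x₂) be the determinant of the 3×3 symmetric matrix T(x) with rows: (100x₀² + 192x₁², −222x₀x₁, −70x₀x₂), (−222x₀x₁, 27x₀² + 225x₁² + 192x₂², −222x₁x₂), and (−70x₀x₂, −222x₁x₂, 165x₀² + 27x₁² + 100x₂²). Then f is a nonnegative ternary sextic that does not span an extreme ray of the cone of nonnegative ternary sextics: there exist nonnegative ternary sextics g, h with f = g + h such that g is not a scalar multiple of f. -/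
/-!
Split `f = det T` as `f = g + h` with `g = 90000 x₀² (x₀² - 4x₁² + 3x₂²)²` and `h = f - g`.
The entries of `T` are quadratic forms, so `f`, and hence `h`, is a sextic form. Nonnegativity
of `h` is certified by writing `(x₀² + x₁² + x₂²) h` as a positive combination of six squares.
Finally `g` vanishes at `(0, 1, 0)`, where `f = 192 · 225 · 27 ≠ 0`, and `g ≠ 0`, so `g` is not
a multiple of `f`.
-/

open MvPolynomial

/-- The acoustic tensor of the Buckley–Šivic extremal biquadratic (with `p = 1/2`,
`q = 3/4`), as a symmetric `3 × 3` matrix of quadratic forms. -/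
noncomputable def acousticT : Matrix (Fin 3) (Fin 3) (MvPolynomial (Fin 3) ℝ) :=
  !![100 * X 0 ^ 2 + 192 * X 1 ^ 2, -222 * (X 0 * X 1), -70 * (X 0 * X 2);
     -222 * (X 0 * X 1), 27 * X 0 ^ 2 + 225 * X 1 ^ 2 + 192 * X 2 ^ 2,
       -222 * (X 1 * X 2);
     -70 * (X 0 * X 2), -222 * (X 1 * X 2),
       165 * X 0 ^ 2 + 27 * X 1 ^ 2 + 100 * X 2 ^ 2]

namespace MvPolynomial

variable {σ R : Type*}

theorem IsHomogeneous.ofNat_mul [CommSemiring R] {p : MvPolynomial σ R} {m : ℕ}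
    (hp : p.IsHomogeneous m) (n : ℕ) [n.AtLeastTwo] :
    ((OfNat.ofNat n : MvPolynomial σ R) * p).IsHomogeneous m := by
  rw [← map_ofNat C n]
  exact hp.C_mul _

theorem _root_.Matrix.isHomogeneous_det [CommRing R] {n : Type*} [Fintype n] [DecidableEq n]
    {M : Matrix n n (MvPolynomial σ R)} {d : ℕ} (hM : ∀ i j, (M i j).IsHomogeneous d) :
    M.det.IsHomogeneous (Fintype.card n * d) := by
  rw [Matrix.det_apply]
  refine IsHomogeneous.sum _ _ _ fun e _ => ?_
  have hprod := IsHomogeneous.prod Finset.univ (fun i => M (e i) i) (fun _ => d) fun i _ => hM _ _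
  rw [Finset.sum_const, Finset.card_univ, smul_eq_mul] at hprod
  rw [Units.smul_def]
  exact (mem_homogeneousSubmodule _ _).mp (zsmul_mem ((mem_homogeneousSubmodule _ _).mpr hprod) _)

/-- The multiplier `∑ xᵢ²` is positive away from the origin, where a form of positive degree
vanishes. -/
theorem IsHomogeneous.eval_nonneg_of_sum_sq_mul_nonneg [Fintype σ] {p : MvPolynomial σ ℝ} {n : ℕ}
    (hp : p.IsHomogeneous n) (hn : n ≠ 0) (h : ∀ x : σ → ℝ, 0 ≤ (∑ i, x i ^ 2) * eval x p)
    (x : σ → ℝ) : 0 ≤ eval x p := by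
  rcases eq_or_ne x 0 with rfl | hx
  · rw [eval_zero, constantCoeff_eq, hp.coeff_eq_zero (by simpa using hn.symm)]
  · obtain ⟨i, hi⟩ := Function.ne_iff.mp hx
    have hpos : 0 < ∑ i, x i ^ 2 :=
      Finset.sum_pos' (fun j _ => sq_nonneg (x j)) ⟨i, Finset.mem_univ i, sq_pos_of_ne_zero hi⟩
    exact nonneg_of_mul_nonneg_right (h x) hpos

theorem not_exists_eq_smul_of_eval [CommRing R] [NoZeroDivisors R] {f g : MvPolynomial σ R}
    {a b : σ → R} (hga : eval a g = 0) (hfa : eval a f ≠ 0) (hgb : eval b g ≠ 0) :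
    ¬∃ c : R, g = c • f := by
  rintro ⟨c, rfl⟩
  rw [smul_eval] at hga hgb
  obtain rfl : c = 0 := (mul_eq_zero.mp hga).resolve_right hfa
  exact hgb (zero_mul _)

end MvPolynomial

theorem acousticT_isHomogeneous (i j : Fin 3) : (acousticT i j).IsHomogeneous 2 := by
  fin_cases i <;> fin_cases j <;>
    simp only [acousticT, Fin.isValue, neg_mul, Fin.zero_eta, Fin.mk_one, Fin.reduceFinMk,
      Matrix.of_apply, Matrix.cons_val', Matrix.cons_val, Matrix.cons_val_zero, Matrix.cons_val_one,
      Matrix.cons_val_fin_one] <;>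
    repeat' first | with_reducible apply IsHomogeneous.add | with_reducible apply IsHomogeneous.neg
  all_goals apply IsHomogeneous.ofNat_mul
  all_goals first
    | exact isHomogeneous_X_pow _ _
    | exact (isHomogeneous_X _ _).mul (isHomogeneous_X _ _)

theorem acousticT_det_isHomogeneous : acousticT.det.IsHomogeneous 6 := by
  simpa using Matrix.isHomogeneous_det acousticT_isHomogeneous

noncomputable def acousticG : MvPolynomial (Fin 3) ℝ :=
  90000 * (X 0 * (X 0 ^ 2 - 4 * X 1 ^ 2 + 3 * X 2 ^ 2)) ^ 2

noncomputable def acousticH : MvPolynomial (Fin 3) ℝ :=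
  acousticT.det - acousticG

theorem acousticG_isHomogeneous : acousticG.IsHomogeneous 6 :=
  (((isHomogeneous_X ℝ 0).mul (((isHomogeneous_X_pow 0 2).sub
    ((isHomogeneous_X_pow 1 2).ofNat_mul 4)).add ((isHomogeneous_X_pow 2 2).ofNat_mul 3))).pow
    2).ofNat_mul 90000

theorem eval_acousticG_nonneg (x : Fin 3 → ℝ) : 0 ≤ eval x acousticG := by
  simp only [acousticG, map_mul, map_pow, map_sub, map_add, map_ofNat, eval_X]
  positivity

theorem sum_sq_mul_eval_acousticH_nonneg (x : Fin 3 → ℝ) :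
    0 ≤ (∑ i, x i ^ 2) * eval x acousticH := by
  obtain ⟨a, b, c, rfl⟩ : ∃ a b c : ℝ, x = ![a, b, c] :=
    ⟨x 0, x 1, x 2, by ext i; fin_cases i <;> rfl⟩
  have sos : (∑ i, ![a, b, c] i ^ 2) * eval ![a, b, c] acousticH =
      5247300 * (-(39232 / 157419) * b ^ 2 * c ^ 2 + (2452 / 17491) * b ^ 4 -
        (99521 / 157419) * a ^ 2 * c ^ 2 + a ^ 2 * b ^ 2 - (4526 / 17491) * a ^ 4) ^ 2 +
      (72647700 / 17491) * ((256 / 9) * b ^ 2 * c ^ 2 - 16 * b ^ 4 -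
        (121 / 9) * a ^ 2 * c ^ 2 + a ^ 4) ^ 2 +
      705600 * (-(16 / 7) * b * c ^ 3 + (9 / 7) * b ^ 3 * c + a ^ 2 * b * c) ^ 2 +
      (5316500 / 3) * (-(12759 / 106330) * a * c ^ 3 + a * b ^ 2 * c -
        (93571 / 106330) * a ^ 3 * c) ^ 2 +
      (1527783465 / 10633) * (-(a * c ^ 3) + a ^ 3 * c) ^ 2 +
      300000 * (3 * a * b * c ^ 2 - 4 * a * b ^ 3 + a ^ 3 * b) ^ 2 := by
    simp only [Fin.sum_univ_three, acousticH, acousticG, acousticT, Matrix.det_fin_three,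
      Matrix.of_apply, Matrix.cons_val', Matrix.cons_val_zero, Matrix.cons_val_one, Matrix.cons_val,
      Matrix.cons_val_fin_one, map_sub, map_add, map_mul, map_neg, map_pow, eval_ofNat, eval_X]
    ring
  rw [sos]
  positivity

/-- The determinant `f = det T(x)` of the above matrix is a nonnegative ternary
sextic which does not span an extreme ray of the cone of nonnegative ternary
sextics: `f = g + h` with `g, h` nonnegative ternary sextics and `g` not a scalar
multiple of `f`. -/
theorem acoustic_determinant_not_extremal :
    (acousticT.det).IsHomogeneous 6 ∧
    (∀ x : Fin 3 → ℝ, 0 ≤ eval x acousticT.det) ∧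
    ∃ g h : MvPolynomial (Fin 3) ℝ,
      g.IsHomogeneous 6 ∧ (∀ x : Fin 3 → ℝ, 0 ≤ eval x g) ∧
      h.IsHomogeneous 6 ∧ (∀ x : Fin 3 → ℝ, 0 ≤ eval x h) ∧
      acousticT.det = g + h ∧ ¬∃ c : ℝ, g = c • acousticT.det := by
  have hH : acousticH.IsHomogeneous 6 := acousticT_det_isHomogeneous.sub acousticG_isHomogeneous
  have hH_nonneg : ∀ x, 0 ≤ eval x acousticH :=
    hH.eval_nonneg_of_sum_sq_mul_nonneg (by norm_num) sum_sq_mul_eval_acousticH_nonneg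
  have hsplit : acousticT.det = acousticG + acousticH := (add_sub_cancel _ _).symm
  refine ⟨acousticT_det_isHomogeneous, fun x => ?_, acousticG, acousticH, acousticG_isHomogeneous,
    eval_acousticG_nonneg, hH, hH_nonneg, hsplit, not_exists_eq_smul_of_eval (a := ![0, 1, 0])
    (b := ![1, 0, 0]) ?_ ?_ ?_⟩
  · rw [hsplit, map_add]
    exact add_nonneg (eval_acousticG_nonneg x) (hH_nonneg x)
  · simp [acousticG]
  · simp [acousticT, Matrix.det_fin_three]
  · simp [acousticG]
end

section
/- Let F be a nonnegative biquadratic form in (n,m) variables that spans an extreme ray of the cone of nonnegative biquadratic forms in (n,m) variables. Then either F is a weak extremal, or F is a perfect square: there exists an n×m real matrix M such that F(x,y) = ⟨x, M y⟩² for all x ∈ ℝⁿ, y ∈ ℝᵐ. -/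
open Matrix

/-- A biquadratic form in `(n,m)` variables:
`F (x, y) = ∑ C i j k l * x i * y j * x k * y l`. -/
def IsBiquadratic (n m : ℕ) (F : (Fin n → ℝ) → (Fin m → ℝ) → ℝ) : Prop :=
  ∃ C : Fin n → Fin m → Fin n → Fin m → ℝ,
    ∀ (x : Fin n → ℝ) (y : Fin m → ℝ),
      F x y = ∑ i, ∑ j, ∑ k, ∑ l, C i j k l * x i * y j * x k * y l

/-- A biquadratic `F` is a weak extremal if the only matrix `M` with
`F x y ≥ ⟨x, M y⟩²` for all `x, y` is `M = 0`. -/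
def IsWeakExtremal (n m : ℕ) (F : (Fin n → ℝ) → (Fin m → ℝ) → ℝ) : Prop :=
  ∀ M : Matrix (Fin n) (Fin m) ℝ,
    (∀ (x : Fin n → ℝ) (y : Fin m → ℝ), (x ⬝ᵥ M.mulVec y) ^ 2 ≤ F x y) → M = 0


lemma biquad_expand (n m : ℕ) (M : Matrix (Fin n) (Fin m) ℝ) (x : Fin n → ℝ) (y : Fin m → ℝ) :
    (x ⬝ᵥ M.mulVec y)^2 = ∑ i, ∑ j, ∑ k, ∑ l, (M i j * M k l) * x i * y j * x k * y l := by
  have h : x ⬝ᵥ M.mulVec y = ∑ i, ∑ j, M i j * x i * y j := by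
    simp [dotProduct, Matrix.mulVec, Finset.mul_sum]
    exact Finset.sum_congr rfl fun i _ => Finset.sum_congr rfl fun j _ => by ring
  rw [h, sq, Finset.sum_mul_sum]
  refine Finset.sum_congr rfl fun i _ => ?_
  rw [← Finset.sum_comm]
  refine Finset.sum_congr rfl fun j _ => ?_
  rw [Finset.sum_mul_sum]
  exact Finset.sum_congr rfl fun k _ => Finset.sum_congr rfl fun l _ => by ring

/-- A nonnegative biquadratic in `(n,m)` variables spanning an extreme ray of the
cone of nonnegative biquadratics is either a weak extremal or a perfect square. -/
theorem extreme_ray_weakExtremal_or_square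
    (n m : ℕ) (F : (Fin n → ℝ) → (Fin m → ℝ) → ℝ)
    (hbq : IsBiquadratic n m F) (hnn : ∀ x y, 0 ≤ F x y)
    (hext : ∀ F₁ F₂ : (Fin n → ℝ) → (Fin m → ℝ) → ℝ,
      IsBiquadratic n m F₁ → (∀ x y, 0 ≤ F₁ x y) →
      IsBiquadratic n m F₂ → (∀ x y, 0 ≤ F₂ x y) →
      (∀ x y, F x y = F₁ x y + F₂ x y) →
      ∃ c₁ c₂ : ℝ, 0 ≤ c₁ ∧ 0 ≤ c₂ ∧
        (∀ x y, F₁ x y = c₁ * F x y) ∧ (∀ x y, F₂ x y = c₂ * F x y)) :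
    IsWeakExtremal n m F ∨
      ∃ M : Matrix (Fin n) (Fin m) ℝ,
        ∀ (x : Fin n → ℝ) (y : Fin m → ℝ), F x y = (x ⬝ᵥ M.mulVec y) ^ 2 := by
  by_cases hwe : IsWeakExtremal n m F
  · exact Or.inl hwe
  right
  simp only [IsWeakExtremal, not_forall] at hwe
  obtain ⟨M, hM, hMne⟩ := hwe
  obtain ⟨C, hC⟩ := hbq
  have hGbq : IsBiquadratic n m (fun x y => (x ⬝ᵥ M.mulVec y)^2) :=
    ⟨fun i j k l => M i j * M k l, fun x y => biquad_expand n m M x y⟩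
  have hF₁bq : IsBiquadratic n m (fun x y => F x y - (x ⬝ᵥ M.mulVec y)^2) := by
    refine ⟨fun i j k l => C i j k l - M i j * M k l, fun x y => ?_⟩
    simp only [hC, biquad_expand n m M x y, sub_mul, Finset.sum_sub_distrib]
  obtain ⟨c₁, c₂, hc₁, hc₂, hf1, hf2⟩ := hext _ _ hF₁bq
    (fun x y => sub_nonneg.mpr (hM x y)) hGbq (fun x y => sq_nonneg _)
    (fun x y => by ring)
  have hne : ∃ i j, M i j ≠ 0 := by
    by_contra h
    push_neg at h
    exact hMne (by ext i j; simp [h])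
  obtain ⟨i, j, hij⟩ := hne
  have hGij : (Pi.single i 1 : Fin n → ℝ) ⬝ᵥ M.mulVec (Pi.single j 1) = M i j := by
    simp [dotProduct, Matrix.mulVec, Pi.single_apply, mul_ite, ite_mul, Finset.sum_ite_eq]
  have hc₂pos : 0 < c₂ := by
    rcases lt_or_eq_of_le hc₂ with h | h
    · exact h
    · exfalso
      have h2 := hf2 (Pi.single i 1) (Pi.single j 1)
      simp only [hGij, ← h, zero_mul, pow_eq_zero_iff, ne_eq, OfNat.ofNat_ne_zero,
        not_false_eq_true] at h2
      exact hij h2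
  refine ⟨(Real.sqrt c₂)⁻¹ • M, fun x y => ?_⟩
  have hdot : x ⬝ᵥ ((Real.sqrt c₂)⁻¹ • M).mulVec y = (Real.sqrt c₂)⁻¹ * (x ⬝ᵥ M.mulVec y) := by
    rw [Matrix.smul_mulVec, dotProduct_smul, smul_eq_mul]
  rw [hdot, mul_pow]
  have hsq : ((Real.sqrt c₂)⁻¹)^2 = c₂⁻¹ := by
    rw [inv_pow, Real.sq_sqrt hc₂]
  have h2 : (x ⬝ᵥ M.mulVec y)^2 = c₂ * F x y := hf2 x y
  rw [hsq, h2]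
  field_simp
end
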